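/- arXiv:2401.03449 — 3 statements merged into one kernel-verified Lean document; each statement's English description precedes it below -/
import Mathlib

section
/- For any ring A and any n ≥ 1, the ring T_n(A) of upper triangular n × n matrices over A is UUSC if and only if A is UUSC. -/
/-- An element `a` of a ring is *uniquely strongly clean* if there is exactly one
idempotent `e` such that `a - e` is a unit and `a * e = e * a`. -/
def IsUSCleanElem {R : Type*} [Ring R] (a : R) : Prop :=
  ∃! e : R, IsIdempotentElem e ∧ IsUnit (a - e) ∧ a * e = e * a

/-- An element `a` of a ring is *uniquely clean* if there is exactly one
idempotent `e` such that `a - e` is a unit. -/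
def IsUCleanElem {R : Type*} [Ring R] (a : R) : Prop :=
  ∃! e : R, IsIdempotentElem e ∧ IsUnit (a - e)

/-- An element `a` of a ring is *clean* if it is the sum of an idempotent and a unit. -/
def IsCleanElem {R : Type*} [Ring R] (a : R) : Prop :=
  ∃ e : R, IsIdempotentElem e ∧ IsUnit (a - e)

/-- A ring is *CUSC* if every clean element is uniquely strongly clean. -/
def IsCUSC (R : Type*) [Ring R] : Prop := ∀ a : R, IsCleanElem a → IsUSCleanElem a

/-- A ring is *UUSC* if every unit is uniquely strongly clean. -/
def IsUUSC (R : Type*) [Ring R] : Prop := ∀ a : R, IsUnit a → IsUSCleanElem a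

/-- A ring is *CUC* if every clean element is uniquely clean. -/
def IsCUC (R : Type*) [Ring R] : Prop := ∀ a : R, IsCleanElem a → IsUCleanElem a

/-- A ring is *UUC* if every unit is uniquely clean. -/
def IsUUC (R : Type*) [Ring R] : Prop := ∀ a : R, IsUnit a → IsUCleanElem a

/-- A ring is *USC* if every element is uniquely strongly clean. -/
def IsUSCRing (R : Type*) [Ring R] : Prop := ∀ a : R, IsUSCleanElem a

/-- A ring is *uniquely clean* (UC) if every element is uniquely clean. -/
def IsUCRing (R : Type*) [Ring R] : Prop := ∀ a : R, IsUCleanElem a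

/-- A ring is *clean* if every element is clean. -/
def IsCleanRing (R : Type*) [Ring R] : Prop := ∀ a : R, IsCleanElem a

/-- The Jacobson radical of a (possibly noncommutative) ring, as a two-sided ideal. -/
abbrev jacobsonRad (R : Type*) [Ring R] : TwoSidedIdeal R := TwoSidedIdeal.jacobson ⊥

/-- The quotient ring `R / J(R)` of a ring by its Jacobson radical. -/
abbrev JacQuot (R : Type*) [Ring R] := (jacobsonRad R).ringCon.Quotient

/-- A ring is *semi-potent* if every one-sided (left or right) ideal not contained in the
Jacobson radical contains a nonzero idempotent.  Left ideals are `Ideal R`, right ideals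
are `Rᵐᵒᵖ`-submodules of `R`. -/
def Semipotent (R : Type*) [Ring R] : Prop :=
  (∀ I : Ideal R, ¬ (I : Set R) ⊆ (jacobsonRad R : Set R) →
      ∃ e ∈ I, e ≠ 0 ∧ IsIdempotentElem e) ∧
  (∀ I : Submodule Rᵐᵒᵖ R, ¬ (I : Set R) ⊆ (jacobsonRad R : Set R) →
      ∃ e ∈ I, e ≠ 0 ∧ IsIdempotentElem e)

/-- Idempotents lift modulo the Jacobson radical: for every `a` with `a - a ^ 2 ∈ J(R)`
there is an idempotent `e` with `a - e ∈ J(R)`. -/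
def IdempotentsLiftJac (R : Type*) [Ring R] : Prop :=
  ∀ a : R, a - a ^ 2 ∈ jacobsonRad R → ∃ e : R, IsIdempotentElem e ∧ a - e ∈ jacobsonRad R

/-- A ring is *potent* if it is semi-potent and idempotents lift modulo the Jacobson radical. -/
def Potent (R : Type*) [Ring R] : Prop := Semipotent R ∧ IdempotentsLiftJac R


/-- The ring of upper triangular `n × n` matrices over `A`, as a subring of the
full matrix ring. -/
def upperTriangularSubring (n : ℕ) (A : Type*) [Ring A] :
    Subring (Matrix (Fin n) (Fin n) A) where
  carrier := {M | ∀ i j : Fin n, j < i → M i j = 0}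
  zero_mem' := fun _ _ _ => rfl
  one_mem' := fun i j h => Matrix.one_apply_ne (ne_of_gt h)
  add_mem' := fun {M N} hM hN i j h => by
    simp [Matrix.add_apply, hM i j h, hN i j h]
  neg_mem' := fun {M} hM i j h => by
    simp [Matrix.neg_apply, hM i j h]
  mul_mem' := fun {M N} hM hN i j h => by
    rw [Matrix.mul_apply]
    refine Finset.sum_eq_zero fun k _ => ?_
    rcases lt_or_ge k i with hk | hk
    · rw [hM i k hk, zero_mul]
    · rw [hN k j (lt_of_lt_of_le h hk), mul_zero]


/-
For a unit `u` the idempotent `0` always works, so a ring is UUSC exactly when `0` is the only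
idempotent `e` commuting with a unit `u` and making `u - e` a unit. This condition passes along
ring homomorphisms that kill no nonzero idempotent, and to products. `A` embeds into
`Tₙ(A)` as scalar matrices (for `n ≥ 1`), and conversely the diagonal `Tₙ(A) →+* Aⁿ` kills no
nonzero idempotent: an idempotent strictly upper triangular matrix is nilpotent, hence zero.
-/

theorem isUUSC_iff_forall_eq_zero {R : Type*} [Ring R] :
    IsUUSC R ↔ ∀ u e : R, IsUnit u → IsIdempotentElem e → IsUnit (u - e) → Commute u e →
      e = 0 := by
  have zero_mem : ∀ u : R, IsUnit u →
      IsIdempotentElem (0 : R) ∧ IsUnit (u - 0) ∧ u * 0 = 0 * u := fun u hu => ⟨.zero, by rwa [sub_zero], by rw [mul_zero, zero_mul]⟩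
  constructor
  · intro h u e hu he hue hc
    obtain ⟨_, _, huniq⟩ := h u hu
    exact (huniq e ⟨he, hue, hc⟩).trans (huniq 0 (zero_mem u hu)).symm
  · intro h u hu
    exact ⟨0, zero_mem u hu, fun e ⟨he, hue, hc⟩ => h u e hu he hue hc⟩

theorem IsUUSC.of_ringHom {R S : Type*} [Ring R] [Ring S] (f : R →+* S) (hS : IsUUSC S)
    (hf : ∀ e : R, IsIdempotentElem e → f e = 0 → e = 0) : IsUUSC R := by
  rw [isUUSC_iff_forall_eq_zero] at hS ⊢
  intro u e hu he hue hc
  exact hf e he <| hS (f u) (f e) (hu.map f) (he.map f) (by simpa only [map_sub] using hue.map f)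
    (hc.map f)

theorem IsUUSC.pi {ι : Type*} {R : ι → Type*} [∀ i, Ring (R i)] (hR : ∀ i, IsUUSC (R i)) :
    IsUUSC (∀ i, R i) := by
  rw [isUUSC_iff_forall_eq_zero]
  intro u e hu he hue hc
  funext i
  exact (isUUSC_iff_forall_eq_zero.mp (hR i)) (u i) (e i) (Pi.isUnit_iff.mp hu i)
    (congrFun he i) (Pi.isUnit_iff.mp hue i) (congrFun hc i)

namespace upperTriangularSubring

variable {n : ℕ} {A : Type*} [Ring A]

def diagRingHom : upperTriangularSubring n A →+* (Fin n → A) where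
  toFun M i := (M : Matrix (Fin n) (Fin n) A) i i
  map_one' := funext fun i => Matrix.one_apply_eq i
  map_mul' M N := by
    funext i
    change ((M : Matrix (Fin n) (Fin n) A) * N) i i = _
    rw [Matrix.mul_apply]
    refine Finset.sum_eq_single i (fun k _ hk => ?_) (by simp)
    rcases lt_or_gt_of_ne hk with h | h
    · rw [M.2 i k h, zero_mul]
    · rw [N.2 k i h, mul_zero]
  map_zero' := rfl
  map_add' _ _ := rfl

def scalarRingHom : A →+* upperTriangularSubring n A :=
  (Matrix.scalar (Fin n)).codRestrict _ fun _ _ _ h => Matrix.diagonal_apply_ne _ h.ne'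

theorem diagRingHom_comp_scalarRingHom :
    diagRingHom.comp scalarRingHom = Pi.constRingHom (Fin n) A := by
  ext a i
  exact Matrix.diagonal_apply_eq _ i

theorem scalarRingHom_injective (hn : 1 ≤ n) :
    Function.Injective (scalarRingHom : A →+* upperTriangularSubring n A) := by
  have : Nonempty (Fin n) := ⟨⟨0, hn⟩⟩
  refine Function.Injective.of_comp (f := diagRingHom) ?_
  rw [← RingHom.coe_comp, diagRingHom_comp_scalarRingHom]
  exact Function.const_injective

theorem eq_zero_of_isIdempotentElem_of_diagRingHom_eq_zero {E : upperTriangularSubring n A}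
    (hE : IsIdempotentElem E) (hdiag : diagRingHom E = 0) : E = 0 := by
  set M : Matrix (Fin n) (Fin n) A := (E : Matrix (Fin n) (Fin n) A)
  have hM : M * M = M := congrArg Subtype.val hE
  have below : ∀ i j : Fin n, j ≤ i → M i j = 0 := by
    intro i j hji
    rcases hji.eq_or_lt with rfl | hlt
    · exact congrFun hdiag j
    · exact E.2 i j hlt
  have band : ∀ d : ℕ, ∀ i j : Fin n, (j : ℕ) ≤ i + d → M i j = 0 := by
    intro d
    induction d with
    | zero => exact fun i j hji => below i j (Fin.le_def.mpr hji)
    | succ d ih =>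
      intro i j hji
      rw [← hM, Matrix.mul_apply]
      refine Finset.sum_eq_zero fun k _ => ?_
      rcases le_or_gt k i with hki | hik
      · rw [below i k hki, zero_mul]
      · rw [ih k j (by rw [Fin.lt_def] at hik; omega), mul_zero]
  exact Subtype.ext <| Matrix.ext fun i j => band n i j (by omega)

end upperTriangularSubring

/-- Corollary 2.14(vi): for any `n ≥ 1`, the upper triangular matrix ring `Tₙ(A)`
is UUSC iff `A` is UUSC. -/
theorem stmt_8 (A : Type*) [Ring A] (n : ℕ) (hn : 1 ≤ n) :
    IsUUSC (upperTriangularSubring n A) ↔ IsUUSC A := by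
  constructor
  · intro h
    exact h.of_ringHom upperTriangularSubring.scalarRingHom fun _ _ he =>
      upperTriangularSubring.scalarRingHom_injective hn (he.trans (map_zero _).symm)
  · intro h
    exact (IsUUSC.pi fun _ => h).of_ringHom upperTriangularSubring.diagRingHom fun _ =>
      upperTriangularSubring.eq_zero_of_isIdempotentElem_of_diagRingHom_eq_zero
end

section
/- Let R be a semi-potent ring and write R̄ = R/J(R). The following are equivalent: (i) R̄ is UUSC; (ii) R̄ is Boolean; (iii) U(R) = 1 + J(R); (iv) every unit of R has the form e + j with e a central idempotent and j ∈ J(R); (v) for each unit a of R there exists a unique idempotent e with a - e ∈ J(R); (vi) for each unit a of R there exists an idempotent e with a - e ∈ J(R). -/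
/-!
Write `Q = R / J(R)`. Semi-potency gives every nonzero `x ∈ Q` an outer inverse `r ≠ 0`,
i.e. `r * x * r = r`: if `x * s` is a nonzero idempotent of the right ideal `x R`, take
`r = s * (x * s)`. In a UUSC ring no unit `u` admits a nonzero idempotent `G` commuting with it
such that `u - G` is a unit. A square-zero `x ≠ 0` together with an outer inverse spans a copy of
the 2 × 2 matrix units, inside which the matrix `[[0, 1], [1, 1]]` would give such a `u`; hence
`Q` is reduced and its idempotents are central. For a unit `u ≠ 1` of `Q`, the central idempotent
`e = (u - 1) * r` then makes `u - e` a unit, so `U(Q) = 1`. Finally, if `a ≠ a²` the central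
idempotent `e = (a - a²) * r` makes `e * a + (1 - e)` a unit, hence equal to `1`, which forces
`e * (a - a²) = 0` and `e = 0`. So `Q` is Boolean. The conditions on `R` itself are then
translated to `Q` using that `1 + J(R)` consists of units, so that units lift modulo `J(R)`.
-/

section UUSC

variable {S : Type*} [Ring S]

theorem IsIdempotentElem.commute_of_isReduced [IsReduced S] {e : S} (he : IsIdempotentElem e)
    (a : S) : Commute e a := by
  have h₁ : e * a * (1 - e) = 0 := IsReduced.eq_zero _ ⟨2, by
    rw [show (e * a * (1 - e)) ^ 2 = e * a * ((1 - e) * e) * a * (1 - e) by noncomm_ring,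
      he.one_sub_mul_self, mul_zero, zero_mul, zero_mul]⟩
  have h₂ : (1 - e) * a * e = 0 := IsReduced.eq_zero _ ⟨2, by
    rw [show ((1 - e) * a * e) ^ 2 = (1 - e) * a * (e * (1 - e)) * a * e by noncomm_ring,
      he.mul_one_sub_self, mul_zero, zero_mul, zero_mul]⟩
  rw [mul_sub, mul_one, sub_eq_zero] at h₁
  rw [sub_mul, sub_mul, one_mul, sub_eq_zero] at h₂
  exact h₁.trans h₂.symm

theorem commute_of_mul_mul_self_eq [IsReduced S] {x r : S} (h : r * x * r = r) : Commute x r := by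
  have he : IsIdempotentElem (x * r) := by rw [IsIdempotentElem, mul_assoc, ← mul_assoc r, h]
  have hf : IsIdempotentElem (r * x) := by rw [IsIdempotentElem, ← mul_assoc, h]
  calc x * r = x * (r * x * r) := by rw [h]
    _ = x * r * (r * x) := by rw [(hf.commute_of_isReduced r).eq]; simp only [mul_assoc]
    _ = r * x * r * x := by rw [← mul_assoc, (he.commute_of_isReduced r).eq]; simp only [mul_assoc]
    _ = r * x := by rw [h]

theorem IsUUSC.eq_zero_of_isUnit_sub (h : IsUUSC S) {u e : S} (hu : IsUnit u)
    (he : IsIdempotentElem e) (hue : u * e = e * u) (hsub : IsUnit (u - e)) : e = 0 :=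
  (h u hu).unique ⟨he, hsub, hue⟩ ⟨.zero, by simpa using hu, by simp⟩

theorem isUUSC_of_forall_isUnit_eq_one (h : ∀ u : S, IsUnit u → u = 1) : IsUUSC S := by
  intro u hu
  refine ⟨0, ⟨.zero, by simpa using hu, by simp⟩, fun e ⟨_, hsub, _⟩ => ?_⟩
  rw [h u hu] at hsub
  simpa using h _ hsub

theorem IsUUSC.isReduced (hS : ∀ x : S, x ≠ 0 → ∃ r ≠ 0, r * x * r = r) (h : IsUUSC S) :
    IsReduced S := by
  refine (isReduced_iff_pow_one_lt 2 one_lt_two).2 fun x hx => ?_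
  rw [sq] at hx
  by_contra hx0
  obtain ⟨r, hr0, hr⟩ := hS x hx0
  have hx' : ∀ t, x * (x * t) = 0 := fun t => by rw [← mul_assoc, hx, zero_mul]
  have hr' : ∀ t, r * (x * (r * t)) = r * t := fun t => by
    rw [← mul_assoc, ← mul_assoc, hr]
  have hr'' : r * (x * r) = r := by rw [← mul_assoc, hr]
  -- for `x = E₁₂`, `r = E₂₁` in `M₂(k)` these are `G = 1` and `u = [[0, 1], [1, 1]]`,
  -- a unit with `u * (u - 1) = 1`
  set G := x * r + r * x - x * r * r * x with hG
  set u := 1 - x * r + x * r * x + r - x * r * r with hu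
  obtain ⟨hGG, huG, hu₁, hu₂, hGxr⟩ : IsIdempotentElem G ∧ u * G = G * u ∧ u * (u - G) = 1 ∧
      (u - G) * u = 1 ∧ G * (x * r) = x * r := by
    refine ⟨?_, ?_, ?_, ?_, ?_⟩ <;>
    · simp only [IsIdempotentElem, hG, hu, mul_sub, sub_mul, mul_add, add_mul, mul_assoc, hx', hr',
        hr'', mul_zero, one_mul, mul_one]
      abel
  have hG0 : G = 0 := h.eq_zero_of_isUnit_sub (isUnit_iff_exists.2 ⟨_, hu₁, hu₂⟩) hGG huG
    (isUnit_iff_exists.2 ⟨_, hu₂, hu₁⟩)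
  apply hr0
  rw [← hr'', ← hGxr, hG0, zero_mul, mul_zero]

theorem IsUUSC.eq_one_of_isUnit (hS : ∀ x : S, x ≠ 0 → ∃ r ≠ 0, r * x * r = r) (h : IsUUSC S)
    {u : S} (hu : IsUnit u) : u = 1 := by
  have := h.isReduced hS
  by_contra hne
  obtain ⟨r, hr0, hr⟩ := hS (u - 1) (sub_ne_zero.2 hne)
  obtain ⟨e, he_def⟩ : ∃ e, e = (u - 1) * r := ⟨_, rfl⟩
  have he : IsIdempotentElem e := by rw [he_def, IsIdempotentElem, mul_assoc, ← mul_assoc r, hr]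
  have hec := he.commute_of_isReduced
  have hre : r * e = r := by rw [he_def, ← mul_assoc, hr]
  have her : e * r = r := by rw [(hec r).eq, hre]
  have hur : u * r = e + r := by rw [he_def, sub_mul, one_mul, sub_add_cancel]
  have hru : r * u = e + r := by
    rw [he_def, (commute_of_mul_mul_self_eq hr).eq, mul_sub, mul_one, sub_add_cancel]
  obtain ⟨w, hw₁, hw₂⟩ := isUnit_iff_exists.1 hu
  have hue : IsUnit (u - e) := by
    refine isUnit_iff_exists.2 ⟨r + (1 - e) * w, ?_, ?_⟩
    · simp only [sub_mul, mul_add, mul_sub, one_mul, mul_one, hur, her, he.mul_self_mul,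
        (hec u).symm.left_comm, hw₁]
      abel
    · simp only [sub_mul, add_mul, mul_sub, one_mul, mul_one, mul_assoc, hru, hre,
        he.mul_self_mul, (hec w).symm.eq, hw₂]
      abel
  have he0 : e = 0 := h.eq_zero_of_isUnit_sub hu he (hec u).eq.symm hue
  exact hr0 (by rw [← hre, he0, mul_zero])

theorem isIdempotentElem_of_forall_isUnit_eq_one [IsReduced S]
    (hS : ∀ x : S, x ≠ 0 → ∃ r ≠ 0, r * x * r = r) (h : ∀ u : S, IsUnit u → u = 1) (a : S) :
    IsIdempotentElem a := by
  by_contra hne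
  obtain ⟨r, hr0, hr⟩ := hS (a - a * a) (sub_ne_zero.2 (Ne.symm hne))
  obtain ⟨e, he_def⟩ : ∃ e, e = (a - a * a) * r := ⟨_, rfl⟩
  have he : IsIdempotentElem e := by rw [he_def, IsIdempotentElem, mul_assoc, ← mul_assoc r, hr]
  have hec := he.commute_of_isReduced
  have hre : r * e = r := by rw [he_def, ← mul_assoc, hr]
  have her : e * r = r := by rw [(hec r).eq, hre]
  have hbr : a * (a * r) = a * r - e := by rw [he_def, sub_mul, mul_assoc, sub_sub_cancel]
  have hrb : r * (a * a) = r * a - e := by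
    rw [he_def, (commute_of_mul_mul_self_eq hr).eq, mul_sub, sub_sub_cancel]
  have hre' : ∀ t, r * (e * t) = r * t := fun t => by rw [← mul_assoc, hre]
  have hcu : IsUnit (e * a + (1 - e)) := by
    refine isUnit_iff_exists_and_exists.2
      ⟨⟨(e - e * a) * r + (1 - e), ?_⟩, ⟨r * (e - e * a) + (1 - e), ?_⟩⟩
    · simp only [sub_mul, add_mul, mul_add, mul_sub, one_mul, mul_one, mul_assoc, he.eq,
        he.mul_self_mul, her, hbr, (hec a).symm.eq, (hec a).symm.left_comm]
      abel
    · simp only [sub_mul, add_mul, mul_add, mul_sub, one_mul, mul_one, mul_assoc, he.eq,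
        he.mul_self_mul, hre, hre', hrb, (hec a).symm.eq, (hec a).symm.left_comm]
      abel
  have hea : e * a = e := by
    rw [← sub_eq_zero, show e * a - e = e * a + (1 - e) - 1 by abel, h _ hcu, sub_self]
  have he0 : e = 0 := by
    rw [← he.eq]
    nth_rewrite 2 [he_def]
    rw [← mul_assoc, mul_sub, ← mul_assoc, hea, hea, sub_self, zero_mul]
  exact hr0 (by rw [← hre, he0, mul_zero])

theorem IsUUSC.isIdempotentElem (hS : ∀ x : S, x ≠ 0 → ∃ r ≠ 0, r * x * r = r) (h : IsUUSC S)
    (a : S) : IsIdempotentElem a :=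
  have := h.isReduced hS
  isIdempotentElem_of_forall_isUnit_eq_one hS (fun _ => h.eq_one_of_isUnit hS) a

end UUSC

section JacobsonRadical

variable {R : Type*} [Ring R]

theorem exists_mul_eq_one_of_sub_one_mem_jacobsonRad {a : R} (h : a - 1 ∈ jacobsonRad R) :
    ∃ z, z * a = 1 := by
  obtain ⟨z, hz⟩ := TwoSidedIdeal.mem_jacobson_iff.1 h 1
  refine ⟨z, ?_⟩
  rwa [TwoSidedIdeal.mem_bot, mul_one, mul_sub, mul_one, sub_add_cancel, sub_eq_zero] at hz

theorem isUnit_of_sub_one_mem_jacobsonRad {a : R} (h : a - 1 ∈ jacobsonRad R) : IsUnit a := by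
  obtain ⟨z, hz⟩ := exists_mul_eq_one_of_sub_one_mem_jacobsonRad h
  have hz' : z - 1 ∈ jacobsonRad R := by
    rw [show z - 1 = -(z * (a - 1)) by rw [mul_sub, hz, mul_one, neg_sub]]
    exact neg_mem (TwoSidedIdeal.mul_mem_left _ _ _ h)
  obtain ⟨w, hw⟩ := exists_mul_eq_one_of_sub_one_mem_jacobsonRad hz'
  exact isUnit_iff_exists.2 ⟨z, left_inv_eq_right_inv hw hz ▸ hw, hz⟩

theorem IsIdempotentElem.eq_zero_of_mem_jacobsonRad {e : R} (he : IsIdempotentElem e)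
    (hJ : e ∈ jacobsonRad R) : e = 0 := by
  have hu : IsUnit (1 - e) := isUnit_of_sub_one_mem_jacobsonRad (by simpa using neg_mem hJ)
  exact (hu.mul_left_eq_zero).1 he.mul_one_sub_self

theorem Semipotent.exists_mul_mul_self_eq (hsp : Semipotent R) {x : R}
    (hx : x ∉ jacobsonRad R) : ∃ r ∉ jacobsonRad R, r * x * r = r := by
  have hxI : ¬ ((Submodule.span Rᵐᵒᵖ {x} : Submodule Rᵐᵒᵖ R) : Set R) ⊆ jacobsonRad R :=
    fun hsub => hx (hsub (Submodule.subset_span rfl))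
  obtain ⟨e, heI, he0, he⟩ := hsp.2 _ hxI
  obtain ⟨s, hs⟩ := Submodule.mem_span_singleton.1 heI
  change x * s.unop = e at hs
  have hxr : x * (s.unop * e) = e := by rw [← mul_assoc, hs, he.eq]
  refine ⟨s.unop * e, fun hr => he0 ?_, ?_⟩
  · exact he.eq_zero_of_mem_jacobsonRad (hxr ▸ TwoSidedIdeal.mul_mem_left _ _ _ hr)
  · rw [mul_assoc, hxr, he.mul_mul_self]

end JacobsonRadical

namespace JacQuot

variable {R : Type*} [Ring R]

variable (R) in
def mk : R →+* JacQuot R := (jacobsonRad R).ringCon.mk'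

theorem mk_surjective : Function.Surjective (mk R) := RingCon.mk'_surjective _

theorem mk_eq_mk_iff {a b : R} : mk R a = mk R b ↔ a - b ∈ jacobsonRad R :=
  (RingCon.eq _).trans (TwoSidedIdeal.rel_iff _ _ _)

theorem mk_eq_zero_iff {a : R} : mk R a = 0 ↔ a ∈ jacobsonRad R := by
  rw [← map_zero (mk R), mk_eq_mk_iff, sub_zero]

theorem mk_eq_one_iff {a : R} : mk R a = 1 ↔ a - 1 ∈ jacobsonRad R := by
  rw [← map_one (mk R), mk_eq_mk_iff]

theorem isUnit_of_isUnit_mk {a : R} (h : IsUnit (mk R a)) : IsUnit a := by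
  obtain ⟨b', hab, hba⟩ := isUnit_iff_exists.1 h
  obtain ⟨b, rfl⟩ := mk_surjective b'
  rw [← map_mul, mk_eq_one_iff] at hab hba
  obtain ⟨c, hc⟩ := isUnit_iff_exists.1 (isUnit_of_sub_one_mem_jacobsonRad hab)
  obtain ⟨d, hd⟩ := isUnit_iff_exists.1 (isUnit_of_sub_one_mem_jacobsonRad hba)
  exact isUnit_iff_exists_and_exists.2
    ⟨⟨b * c, by rw [← mul_assoc, hc.1]⟩, ⟨d * b, by rw [mul_assoc, hd.2]⟩⟩

theorem sub_one_mem_of_isUnit_of_isIdempotentElem_mk {a : R} (ha : IsUnit a)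
    (h : IsIdempotentElem (mk R a)) : a - 1 ∈ jacobsonRad R :=
  mk_eq_one_iff.1 ((IsIdempotentElem.iff_eq_one_of_isUnit (ha.map _)).1 h)

theorem exists_mul_mul_self_eq_of_semipotent (hsp : Semipotent R) {x : JacQuot R} (hx : x ≠ 0) :
    ∃ r ≠ 0, r * x * r = r := by
  obtain ⟨x, rfl⟩ := mk_surjective x
  obtain ⟨r, hr, hrx⟩ := hsp.exists_mul_mul_self_eq (mt mk_eq_zero_iff.2 hx)
  exact ⟨mk R r, mt mk_eq_zero_iff.1 hr, by rw [← map_mul, ← map_mul, hrx]⟩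

end JacQuot

/-- Theorem 3.1: characterizations of semi-potent rings whose quotient `R/J(R)` is UUSC. -/
theorem stmt_9 (R : Type*) [Ring R] (hsp : Semipotent R) :
    List.TFAE
      [IsUUSC (JacQuot R),
       ∀ a : JacQuot R, IsIdempotentElem a,
       ∀ a : R, IsUnit a ↔ a - 1 ∈ jacobsonRad R,
       ∀ a : R, IsUnit a → ∃ e j : R, IsIdempotentElem e ∧ (∀ r : R, e * r = r * e) ∧
         j ∈ jacobsonRad R ∧ a = e + j,
       ∀ a : R, IsUnit a → ∃! e : R, IsIdempotentElem e ∧ a - e ∈ jacobsonRad R,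
       ∀ a : R, IsUnit a → ∃ e : R, IsIdempotentElem e ∧ a - e ∈ jacobsonRad R] := by
  tfae_have 1 → 2 := fun h =>
    h.isIdempotentElem fun _ => JacQuot.exists_mul_mul_self_eq_of_semipotent hsp
  tfae_have 2 → 3 := fun h a =>
    ⟨fun ha => JacQuot.sub_one_mem_of_isUnit_of_isIdempotentElem_mk ha (h _),
      isUnit_of_sub_one_mem_jacobsonRad⟩
  tfae_have 3 → 1 := fun h => isUUSC_of_forall_isUnit_eq_one fun u hu => by
    obtain ⟨a, rfl⟩ := JacQuot.mk_surjective u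
    exact JacQuot.mk_eq_one_iff.2 ((h a).1 (JacQuot.isUnit_of_isUnit_mk hu))
  tfae_have 3 → 4 := fun h a ha =>
    ⟨1, a - 1, .one, fun r => by rw [one_mul, mul_one], (h a).1 ha, (add_sub_cancel 1 a).symm⟩
  tfae_have 4 → 6 := fun h a ha => by
    obtain ⟨e, j, he, -, hj, rfl⟩ := h a ha
    exact ⟨e, he, by rwa [add_sub_cancel_left]⟩
  tfae_have 3 → 5 := fun h a ha => ⟨1, ⟨.one, (h a).1 ha⟩, fun e ⟨he, hae⟩ => by
    have h1e : 1 - e ∈ jacobsonRad R := by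
      simpa using (jacobsonRad R).sub_mem hae ((h a).1 ha)
    exact (sub_eq_zero.1 (he.one_sub.eq_zero_of_mem_jacobsonRad h1e)).symm⟩
  tfae_have 5 → 6 := fun h a ha => (h a ha).exists
  tfae_have 6 → 3 := fun h a => ⟨fun ha => by
      obtain ⟨e, he, hae⟩ := h a ha
      refine JacQuot.sub_one_mem_of_isUnit_of_isIdempotentElem_mk ha ?_
      rw [JacQuot.mk_eq_mk_iff.2 hae]
      exact he.map _,
    isUnit_of_sub_one_mem_jacobsonRad⟩
  tfae_finish
end

section
/- Let R be a CUSC (respectively, UUSC) ring. Then for any integer n > 1 there does not exist a nonzero idempotent e of R such that the corner ring eRe is isomorphic to the full n × n matrix ring M_n(S) over some nontrivial ring S. -/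
/-- The corner `eRe` of a ring determined by an idempotent `e`, as a non-unital subring
(it is a ring with identity element `e`). -/
def cornerSubring {R : Type*} [Ring R] (e : R) : NonUnitalSubring R where
  carrier := {x | e * x = x ∧ x * e = x}
  zero_mem' := ⟨mul_zero e, zero_mul e⟩
  add_mem' := fun {a b} ha hb => ⟨by rw [mul_add, ha.1, hb.1], by rw [add_mul, ha.2, hb.2]⟩
  neg_mem' := fun {a} ha => ⟨by rw [mul_neg, ha.1], by rw [neg_mul, ha.2]⟩
  mul_mem' := fun {a b} ha hb => ⟨by rw [← mul_assoc, ha.1], by rw [mul_assoc, hb.2]⟩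

/-!
A unit `u` of any ring has the strongly clean decomposition `u = 0 + u`, so a ring is UUSC
exactly when no unit `u` commutes with a nonzero idempotent `f` for which `u - f` is again a
unit. In `Mₙ(S)` with `n ≥ 2` such a pair exists: for indices `i ≠ j` take `f = Eᵢᵢ + Eⱼⱼ` and
`v` acting as `[[1, 1], [1, 0]]` on the coordinates `i, j` and as the identity elsewhere, so that
`v - f` acts as `[[0, 1], [1, -1]]`. The UUSC property passes to corners `eRe`, because a unit
`x` of `eRe` lifts to the unit `x + (1 - e)` of `R`; and a CUSC ring is UUSC since every unit is
clean.
-/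

theorem isUUSC_iff {T : Type*} [Ring T] :
    IsUUSC T ↔ ∀ u f : T, IsUnit u → IsIdempotentElem f → IsUnit (u - f) → Commute u f →
      f = 0 := by
  constructor
  · rintro hT u f hu hf huf hcomm
    obtain ⟨g, -, hg⟩ := hT u hu
    exact (hg f ⟨hf, huf, hcomm⟩).trans (hg 0 ⟨.zero, by simpa using hu, by simp⟩).symm
  · intro hT u hu
    exact ⟨0, ⟨.zero, by simpa using hu, by simp⟩,
      fun f ⟨hf, huf, hcomm⟩ => hT u f hu hf huf hcomm⟩

theorem IsCUSC.isUUSC {R : Type*} [Ring R] (hR : IsCUSC R) : IsUUSC R :=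
  fun u hu => hR u ⟨0, .zero, by simpa using hu⟩

theorem Matrix.not_isUUSC {ι S : Type*} [Fintype ι] [DecidableEq ι] [Ring S] [Nontrivial S]
    {i j : ι} (hij : i ≠ j) : ¬ IsUUSC (Matrix ι ι S) := by
  set f : Matrix ι ι S := single i i 1 + single j j 1
  set v : Matrix ι ι S := 1 + single i j 1 + single j i 1 - single j j 1
  have hvw : v * (v - f) = 1 := by
    simp only [f, v, mul_add, add_mul, mul_sub, sub_mul, one_mul, mul_one]
    simp [hij, hij.symm]
    abel
  have hwv : (v - f) * v = 1 := by
    simp only [f, v, mul_add, add_mul, mul_sub, sub_mul, one_mul, mul_one]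
    simp [hij, hij.symm]
    abel
  have hf : IsIdempotentElem f := by
    simp only [IsIdempotentElem, f, mul_add, add_mul]
    simp [hij, hij.symm]
  have hcomm : Commute v f := by
    simp only [Commute, SemiconjBy, f, v, mul_add, add_mul, mul_sub, sub_mul, one_mul, mul_one]
    simp [hij, hij.symm]
    abel
  have hf0 : f ≠ 0 := fun h0 => by
    simpa [f, hij.symm] using congrFun (congrFun h0 i) i
  exact fun hT => hf0 (isUUSC_iff.mp hT v f ⟨⟨v, v - f, hvw, hwv⟩, rfl⟩
    hf ⟨⟨v - f, v, hwv, hvw⟩, rfl⟩ hcomm)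

namespace cornerSubring

variable {R T : Type*} [Ring R] [Ring T] {e : R}

theorem coe_ringEquiv_symm_one (he : IsIdempotentElem e) (φ : cornerSubring e ≃+* T) :
    (φ.symm 1 : R) = e := by
  let eC : cornerSubring e := ⟨e, he, he⟩
  have hleft : eC * φ.symm 1 = eC :=
    φ.injective (by rw [map_mul, φ.apply_symm_apply, mul_one])
  exact ((φ.symm 1).2.1.symm.trans (congrArg Subtype.val hleft) :)

theorem add_one_sub_mul_add_one_sub {x y : R} (he : IsIdempotentElem e) (hx : x ∈ cornerSubring e)
    (hy : y ∈ cornerSubring e) (hxy : x * y = e) : (x + (1 - e)) * (y + (1 - e)) = 1 := by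
  have hxe : x * (1 - e) = 0 := by rw [mul_sub, mul_one, hx.2, sub_self]
  have hey : (1 - e) * y = 0 := by rw [sub_mul, one_mul, hy.1, sub_self]
  have hee : (1 - e) * (1 - e) = 1 - e := he.one_sub
  calc (x + (1 - e)) * (y + (1 - e))
      = x * y + x * (1 - e) + (1 - e) * y + (1 - e) * (1 - e) := by noncomm_ring
    _ = 1 := by rw [hxy, hxe, hey, hee]; abel

theorem isUnit_coe_add_one_sub (he : IsIdempotentElem e) (φ : cornerSubring e ≃+* T)
    (x : cornerSubring e) (hx : IsUnit (φ x)) : IsUnit ((x : R) + (1 - e)) := by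
  obtain ⟨w, hw⟩ := hx
  set y := φ.symm ↑w⁻¹
  have hxy : x * y = φ.symm 1 := by rw [← φ.symm_apply_apply x, ← map_mul, ← hw, w.mul_inv]
  have hyx : y * x = φ.symm 1 := by rw [← φ.symm_apply_apply x, ← map_mul, ← hw, w.inv_mul]
  have hxy' : (x : R) * y = e := (congrArg Subtype.val hxy).trans (coe_ringEquiv_symm_one he φ)
  have hyx' : (y : R) * x = e := (congrArg Subtype.val hyx).trans (coe_ringEquiv_symm_one he φ)
  exact ⟨⟨_, _, add_one_sub_mul_add_one_sub he x.2 y.2 hxy',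
    add_one_sub_mul_add_one_sub he y.2 x.2 hyx'⟩, rfl⟩

end cornerSubring

theorem IsUUSC.of_ringEquiv_cornerSubring {R T : Type*} [Ring R] [Ring T] (hR : IsUUSC R)
    {e : R} (he : IsIdempotentElem e) (φ : cornerSubring e ≃+* T) : IsUUSC T := by
  refine isUUSC_iff.mpr fun u f hu hf huf hcomm => ?_
  set x := φ.symm u
  set p := φ.symm f
  have hxp : φ (x - p) = u - f := by simp [x, p]
  have hU := cornerSubring.isUnit_coe_add_one_sub he φ x (by simpa [x] using hu)
  have hUp := cornerSubring.isUnit_coe_add_one_sub he φ (x - p) (hxp ▸ huf)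
  have hpe : (p : R) * (1 - e) = 0 := by rw [mul_sub, mul_one, p.2.2, sub_self]
  have hep : (1 - e) * (p : R) = 0 := by rw [sub_mul, one_mul, p.2.1, sub_self]
  have hp : IsIdempotentElem (p : R) := congrArg Subtype.val (hf.map φ.symm)
  have hxpR : Commute (x : R) p := congrArg Subtype.val (hcomm.map φ.symm)
  have hUcomm : Commute ((x : R) + (1 - e)) p := by
    simp only [Commute, SemiconjBy, add_mul, mul_add, hpe, hep] at hxpR ⊢
    rw [hxpR]
  rw [AddSubgroupClass.coe_sub, ← add_sub_right_comm] at hUp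
  have hp0 : (p : R) = 0 := isUUSC_iff.mp hR _ _ hU hp hUp hUcomm
  simpa [p] using congrArg φ (Subtype.ext hp0 : p = 0)

/-- Theorem 3.6(iii): in a CUSC (resp. UUSC) ring `R`, for no `n > 1` is there a nonzero
idempotent `e` with the corner ring `eRe` isomorphic to the full matrix ring `Mₙ(S)`
over some nontrivial ring `S`. -/
theorem stmt_15 {R : Type*} [Ring R] (h : IsCUSC R ∨ IsUUSC R) :
    ∀ n : ℕ, 1 < n → ∀ e : R, IsIdempotentElem e → e ≠ 0 →
      ∀ (S : Type*) [Ring S] [Nontrivial S],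
        IsEmpty (cornerSubring e ≃+* Matrix (Fin n) (Fin n) S) := by
  intro n hn e he _ S _ _
  refine ⟨fun φ => ?_⟩
  have hUUSC : IsUUSC R := h.elim IsCUSC.isUUSC id
  have h01 : (⟨0, by omega⟩ : Fin n) ≠ ⟨1, hn⟩ := by simp
  exact Matrix.not_isUUSC h01 (hUUSC.of_ringEquiv_cornerSubring he φ)
end
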